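/- arXiv:2605.13768 — 9 statements merged into one kernel-verified Lean document; each statement's English description precedes it below -/
import Mathlib

section
/- Let c = c_SIC(y) be the output of the SIC quantizer applied to y ∈ ℝⁿ. Then the error vector e = y − U·c satisfies e_i ∈ [−α_i U_{i,i}/2, α_i U_{i,i}/2) for every i ∈ {1,…,n}; that is, e ∈ 𝒫. -/
open Finset

/-- The SIC (successive interference cancellation) quantizer with respect to an
upper-triangular matrix `U` and per-coordinate spacings `α`, defined by backward
recursion `c_SIC(y)_i = α_i ⌊(y_i − Σ_{j>i} U_{i,j} c_SIC(y)_j)/(α_i U_{i,i}) + 1/2⌋`. -/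
noncomputable def cSIC {n : ℕ} (U : Matrix (Fin n) (Fin n) ℝ) (α : Fin n → ℝ)
    (y : Fin n → ℝ) : Fin n → ℝ
  | i =>
    α i * ((round ((y i - ∑ j ∈ (Finset.univ.filter fun j => i < j).attach,
        U i j.1 * cSIC U α y j.1) / (α i * U i i)) : ℤ) : ℝ)
termination_by i => n - i.1
decreasing_by
  have h := j.2
  simp only [Finset.mem_filter, Finset.mem_univ, true_and] at h
  have h2 : (j.1 : ℕ) < n := j.1.isLt
  have h3 : (i : ℕ) < (j.1 : ℕ) := h
  omega

/-- the error vector `e = y − U·c_SIC(y)` lies coordinatewise in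
`[−α_i U_{i,i}/2, α_i U_{i,i}/2)`; that is, `e ∈ 𝒫`. -/
theorem sic_error_in_fundamental_cell {n : ℕ} (hn : 1 ≤ n)
    (U : Matrix (Fin n) (Fin n) ℝ)
    (hUtri : ∀ i j : Fin n, j < i → U i j = 0)
    (hUdiag : ∀ i : Fin n, 0 < U i i)
    (α : Fin n → ℝ) (hα : ∀ i : Fin n, 0 < α i)
    (y : Fin n → ℝ) :
    ∀ i : Fin n, y i - U.mulVec (cSIC U α y) i ∈
      Set.Ico (-(α i * U i i) / 2) (α i * U i i / 2) := by
  intro i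
  set c := cSIC U α y with hc
  set S : ℝ := ∑ j ∈ Finset.univ.filter (fun j => i < j), U i j * c j with hS
  have hci : c i = α i * ((round ((y i - S) / (α i * U i i)) : ℤ) : ℝ) := by
    rw [hc, cSIC, Finset.sum_attach (Finset.univ.filter (fun j => i < j))
      (fun j => U i j * cSIC U α y j)]
  have hmv : U.mulVec c i = U i i * c i + S := by
    rw [Matrix.mulVec, dotProduct]
    have hsplit : (Finset.univ : Finset (Fin n)) =
        insert i (Finset.univ.filter (fun j => i < j)) ∪
          Finset.univ.filter (fun j => j < i) := by
      ext j
      simp only [Finset.mem_union, Finset.mem_insert, Finset.mem_filter,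
        Finset.mem_univ, true_and]
      constructor
      · intro _
        rcases lt_trichotomy i j with h | h | h
        · exact Or.inl (Or.inr h)
        · exact Or.inl (Or.inl h.symm)
        · exact Or.inr h
      · intro _; trivial
    have hdisj : Disjoint (insert i (Finset.univ.filter (fun j => i < j)))
        (Finset.univ.filter (fun j => j < i)) := by
      rw [Finset.disjoint_left]
      intro x hx1 hx2
      simp only [Finset.mem_insert, Finset.mem_filter, Finset.mem_univ, true_and] at hx1 hx2
      rcases hx1 with h | h
      · exact absurd (h ▸ hx2) (lt_irrefl i)
      · exact absurd (hx2.trans h) (lt_irrefl x)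
    have hnotmem : i ∉ Finset.univ.filter (fun j => i < j) := by simp
    rw [hsplit, Finset.sum_union hdisj, Finset.sum_insert hnotmem]
    have hz : ∑ j ∈ Finset.univ.filter (fun j => j < i), U i j * c j = 0 := by
      apply Finset.sum_eq_zero
      intro j hj
      simp only [Finset.mem_filter, Finset.mem_univ, true_and] at hj
      rw [hUtri i j hj, zero_mul]
    rw [hz, add_zero]
  set s : ℝ := α i * U i i with hs
  have hspos : 0 < s := mul_pos (hα i) (hUdiag i)
  set t : ℝ := (y i - S) / s with ht
  have hyS : y i - S = s * t := by
    rw [ht]; field_simp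
  have hrnd := round_eq t
  have h1 : ((round t : ℤ) : ℝ) ≤ t + 1/2 := by
    rw [hrnd]; exact_mod_cast Int.floor_le (t + 1/2)
  have h2 : t + 1/2 < ((round t : ℤ) : ℝ) + 1 := by
    rw [hrnd]; exact_mod_cast Int.lt_floor_add_one (t + 1/2)
  have he : y i - U.mulVec c i = s * (t - ((round t : ℤ) : ℝ)) := by
    rw [hmv, hci]
    have : y i - (U i i * (α i * ((round t : ℤ) : ℝ)) + S)
        = (y i - S) - s * ((round t : ℤ) : ℝ) := by rw [hs]; ring
    rw [this, hyS]; ring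
  rw [he]
  constructor
  · nlinarith
  · nlinarith
end

section
/- Let 𝒜 = diag(α_1,…,α_n). For every y ∈ ℝⁿ and every integer vector z ∈ ℤⁿ, the SIC quantizer satisfies the lattice equivariance c_SIC(y + U·𝒜·z) = 𝒜·z + c_SIC(y). -/
open Finset

/-!
Coordinate `i` of `c_SIC` only sees `y_i` and the already decided coordinates `j > i`. Shifting
`y` by the lattice vector `U 𝒜 z` adds `U_{ii} α_i z_i + Σ_{j>i} U_{ij} α_j z_j` to `y_i`; if the
coordinates `j > i` have already moved by `α_j z_j`, the off-diagonal part cancels in the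
residual, which then moves by exactly `U_{ii} α_i z_i`. After division by `α_i U_{ii}` this is
the integer shift `z_i`, which commutes with rounding. Downward induction on `i` finishes.
-/

open Matrix

namespace Matrix

lemma BlockTriangular.mulVec_apply_eq {m R : Type*} [Fintype m] [LinearOrder m]
    [LocallyFiniteOrderTop m] [NonUnitalNonAssocSemiring R] {U : Matrix m m R}
    (hU : U.BlockTriangular id) (v : m → R) (i : m) :
    (U *ᵥ v) i = U i i * v i + ∑ j ∈ Ioi i, U i j * v j := by
  have hlower : ∑ j with ¬i ≤ j, U i j * v j = 0 :=
    sum_eq_zero fun j hj => by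
      rw [hU (not_le.mp (mem_filter.mp hj).2), zero_mul]
  rw [mulVec, dotProduct, ← sum_filter_add_sum_filter_not univ (i ≤ ·), hlower, add_zero,
    filter_le_eq_Ici, ← add_sum_Ioi_eq_sum_Ici]

end Matrix

lemma round_div_intCast_mul_add {K : Type*} [Field K] [LinearOrder K] [IsStrictOrderedRing K]
    [FloorRing K] {a d : K} (had : a * d ≠ 0) (k : ℤ) (t : K) :
    round ((d * (a * k) + t) / (a * d)) = k + round (t / (a * d)) := by
  rw [add_div, show d * (a * k) = a * d * k by ring,
    mul_div_cancel_left₀ _ had, round_intCast_add]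

section cSIC

variable {n : ℕ} (U : Matrix (Fin n) (Fin n) ℝ) (α : Fin n → ℝ)

lemma cSIC_apply (y : Fin n → ℝ) (i : Fin n) :
    cSIC U α y i =
      α i * round ((y i - ∑ j ∈ Ioi i, U i j * cSIC U α y j) / (α i * U i i)) := by
  rw [cSIC, sum_attach _ fun j => U i j * cSIC U α y j, filter_lt_eq_Ioi]

variable {U α}

theorem cSIC_add_mulVec (hU : U.BlockTriangular id) (hdiag : ∀ i, α i * U i i ≠ 0)
    (y : Fin n → ℝ) (z : Fin n → ℤ) :
    cSIC U α (y + U *ᵥ fun i => α i * z i) = (fun i => α i * z i) + cSIC U α y := by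
  funext i
  induction i using WellFoundedGT.induction with
  | _ i ih =>
    have hresidual :
        (y + U *ᵥ fun i => α i * z i) i
            - ∑ j ∈ Ioi i, U i j * cSIC U α (y + U *ᵥ fun i => α i * z i) j =
          U i i * (α i * z i) + (y i - ∑ j ∈ Ioi i, U i j * cSIC U α y j) := by
      have hshifted : ∑ j ∈ Ioi i, U i j * cSIC U α (y + U *ᵥ fun i => α i * z i) j =
          ∑ j ∈ Ioi i, U i j * (α j * z j + cSIC U α y j) :=
        sum_congr rfl fun j hj => by rw [ih j (mem_Ioi.mp hj), Pi.add_apply]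
      rw [hshifted, Pi.add_apply, hU.mulVec_apply_eq]
      simp only [mul_add, sum_add_distrib]
      ring
    rw [cSIC_apply, hresidual, round_div_intCast_mul_add (hdiag i), Pi.add_apply, cSIC_apply]
    push_cast
    ring

end cSIC

theorem sic_lattice_equivariance_general {n : ℕ}
    (U : Matrix (Fin n) (Fin n) ℝ)
    (hUtri : ∀ i j : Fin n, j < i → U i j = 0)
    (hUdiag : ∀ i : Fin n, 0 < U i i)
    (α : Fin n → ℝ) (hα : ∀ i : Fin n, 0 < α i)
    (y : Fin n → ℝ) (z : Fin n → ℤ) :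
    cSIC U α (y + U.mulVec (fun i => α i * (z i : ℝ))) =
      (fun i => α i * (z i : ℝ)) + cSIC U α y :=
  cSIC_add_mulVec (fun _ _ => hUtri _ _) (fun i => (mul_pos (hα i) (hUdiag i)).ne') y z

/-- lattice equivariance of the SIC quantizer:
`c_SIC(y + U·𝒜·z) = 𝒜·z + c_SIC(y)` for every `z ∈ ℤⁿ`, where `𝒜 = diag(α)`. -/
theorem sic_lattice_equivariance {n : ℕ} (hn : 1 ≤ n)
    (U : Matrix (Fin n) (Fin n) ℝ)
    (hUtri : ∀ i j : Fin n, j < i → U i j = 0)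
    (hUdiag : ∀ i : Fin n, 0 < U i i)
    (α : Fin n → ℝ) (hα : ∀ i : Fin n, 0 < α i)
    (y : Fin n → ℝ) (z : Fin n → ℤ) :
    cSIC U α (y + U.mulVec (fun i => α i * (z i : ℝ))) =
      (fun i => α i * (z i : ℝ)) + cSIC U α y :=
  sic_lattice_equivariance_general U hUtri hUdiag α hα y z
end

section
/- Apply the SIC quantizer with the WaterSIC scaling factors α_i = α·det(Σ_X)^{1/(2n)}/U_{i,i} to the vector y = U·W for an arbitrary W ∈ ℝⁿ, and set Ŵ = c_SIC(U·W). Then: (i) ∏_{i=1}^n α_i = αⁿ, i.e., the product codebook lattice (α_1ℤ)×···×(α_nℤ) has point density α^{−n}; and (ii) every coordinate of the weighted error satisfies (U·(W − Ŵ))_i ∈ α·det(Σ_X)^{1/(2n)}·[−1/2, 1/2), i.e., U·(W − Ŵ) ∈ α·det(Σ_X)^{1/(2n)}·[−1/2, 1/2)ⁿ. -/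
open Finset

lemma sub_round_mem (x : ℝ) : x - round x ∈ Set.Ico (-(1/2) : ℝ) (1/2) := by
  rw [round_eq]
  have h1 := Int.fract_nonneg (x + 1/2)
  have h2 := Int.fract_lt_one (x + 1/2)
  unfold Int.fract at h1 h2
  constructor <;> [linarith; linarith]

/-- applying SIC with the WaterSIC scalings
`α_i = α·det(Σ_X)^{1/(2n)}/U_{i,i}` (where `Σ_X = UᵀU`) to `y = U·W`:
(i) `∏_i α_i = αⁿ`, i.e. the lattice `∏_i α_i ℤ` has point density `α^{−n}`; and
(ii) every coordinate of the weighted error `U·(W − Ŵ)`, with `Ŵ = c_SIC(U·W)`,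
lies in `α·det(Σ_X)^{1/(2n)}·[−1/2, 1/2)`. -/
theorem waterSIC_density_and_error {n : ℕ} (hn : 1 ≤ n)
    (U : Matrix (Fin n) (Fin n) ℝ)
    (hUtri : ∀ i j : Fin n, j < i → U i j = 0)
    (hUdiag : ∀ i : Fin n, 0 < U i i)
    (α : ℝ) (hα : 0 < α) (W : Fin n → ℝ) :
    (∏ i, (α * (U.transpose * U).det ^ ((1 : ℝ) / (2 * n)) / U i i) = α ^ n) ∧
    (∀ i : Fin n,
      U.mulVec (W - cSIC U
          (fun i => α * (U.transpose * U).det ^ ((1 : ℝ) / (2 * n)) / U i i)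
          (U.mulVec W)) i ∈
        Set.Ico (α * (U.transpose * U).det ^ ((1 : ℝ) / (2 * n)) * (-(1 / 2)))
          (α * (U.transpose * U).det ^ ((1 : ℝ) / (2 * n)) * (1 / 2))) := by
  set P : ℝ := ∏ i, U i i with hPdef
  have hP : 0 < P := Finset.prod_pos fun i _ => hUdiag i
  have hdetU : U.det = P := Matrix.det_of_upperTriangular (fun i j h => hUtri i j h)
  have hdet : (U.transpose * U).det = P ^ 2 := by
    rw [Matrix.det_mul, Matrix.det_transpose, hdetU]; ring
  set D : ℝ := (U.transpose * U).det ^ ((1 : ℝ) / (2 * n)) with hDdef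
  have hD : 0 < D := by
    rw [hDdef, hdet]
    exact Real.rpow_pos_of_pos (by positivity) _
  have hDn : D ^ n = P := by
    rw [hDdef, hdet, ← Real.rpow_natCast ((P ^ 2) ^ ((1:ℝ)/(2*(n:ℝ)))) n,
      ← Real.rpow_mul (by positivity), ← Real.rpow_natCast P 2,
      ← Real.rpow_mul hP.le]
    have hn0 : (n : ℝ) ≠ 0 := Nat.cast_ne_zero.mpr (by omega)
    rw [show ((2:ℕ):ℝ) * ((1:ℝ) / (2 * (n:ℝ)) * (n:ℝ)) = 1 by push_cast; field_simp]
    exact Real.rpow_one P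
  refine ⟨?_, ?_⟩
  · rw [Finset.prod_div_distrib, Finset.prod_const, ← hPdef, Finset.card_univ,
      Fintype.card_fin, mul_pow, hDn, mul_div_assoc, div_self hP.ne', mul_one]
  · intro i
    set αf : Fin n → ℝ := fun i => α * D / U i i with hαf
    set y : Fin n → ℝ := U.mulVec W with hy
    set Wh : Fin n → ℝ := cSIC U αf y with hWh
    have hc : αf i * U i i = α * D := by
      show α * D / U i i * U i i = α * D
      exact div_mul_cancel₀ _ (hUdiag i).ne'
    -- sum split
    have hsplit : ∑ j, U i j * Wh j
        = (∑ j ∈ Finset.univ.filter fun j => i < j, U i j * Wh j) + U i i * Wh i := by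
      rw [← Finset.sum_filter_add_sum_filter_not Finset.univ (fun j => i < j)]
      congr 1
      rw [Finset.sum_eq_single i]
      · intro j hj hji
        simp only [Finset.mem_filter, Finset.mem_univ, true_and, not_lt] at hj
        rw [hUtri i j (lt_of_le_of_ne hj hji), zero_mul]
      · intro h
        simp at h
    set S : ℝ := ∑ j ∈ Finset.univ.filter fun j => i < j, U i j * Wh j with hS
    have hattach : ∑ j ∈ (Finset.univ.filter fun j => i < j).attach,
        U i j.1 * Wh j.1 = S :=
      Finset.sum_attach (Finset.univ.filter fun j => i < j) (fun j => U i j * Wh j)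
    have hWhi : Wh i = αf i * ((round ((y i - S) / (αf i * U i i)) : ℤ) : ℝ) := by
      rw [hWh]
      conv_lhs => rw [cSIC]
      rw [← hWh, hattach]
    set t : ℝ := (y i - S) / (αf i * U i i) with ht
    have hcpos : (0:ℝ) < α * D := by positivity
    have herr : U.mulVec (W - Wh) i = (α * D) * (t - ((round t : ℤ) : ℝ)) := by
      have : U.mulVec (W - Wh) i = y i - ∑ j, U i j * Wh j := by
        simp only [Matrix.mulVec, dotProduct, hy, Pi.sub_apply]
        rw [← Finset.sum_sub_distrib]
        congr 1; ext j; ring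
      have hne : αf i * U i i ≠ 0 := by rw [hc]; exact hcpos.ne'
      have hct : (αf i * U i i) * t = y i - S := by
        rw [ht, mul_comm, div_mul_cancel₀ _ hne]
      rw [this, hsplit, hWhi, ← hc, mul_sub, hct]
      ring
    rw [herr]
    have hm := sub_round_mem t
    exact ⟨by nlinarith [hm.1], by nlinarith [hm.2]⟩
end

section
/- Let n ≥ 1 and let S ⊆ ℝⁿ be a Lebesgue-measurable set with volume V = vol(S) ∈ (0, ∞). Then ∫_S ‖x‖² dx ≥ ∫_B ‖x‖² dx, where B is the closed Euclidean ball centered at the origin with vol(B) = V; explicitly, ∫_S ‖x‖² dx ≥ (n/(n+2)) · (Γ(n/2 + 1))^{2/n} · V^{(n+2)/n} / π. -/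
/-!
Bathtub principle: if `B` is the centred ball with `vol B = vol S` and radius `r`, then
`S \ B` and `B \ S` have equal volume, while `‖x‖² ≥ r²` on the first and `‖x‖² ≤ r²` on the
second, so trading one for the other can only lower the integral. In polar coordinates the
second moment of a ball in dimension `d` is `d / (d + 2) · r² · vol B`, and solving
`vol B = V` for `r` gives the explicit bound.
-/

open MeasureTheory Module Real
open scoped ENNReal

theorem setLIntegral_le_setLIntegral_of_measure_eq {α : Type*} [MeasurableSpace α]
    {μ : Measure α} {f : α → ℝ≥0∞} {S B : Set α} (hS : MeasurableSet S) (hB : MeasurableSet B)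
    (hμ : μ B = μ S) (hfin : μ S ≠ ∞) (c : ℝ≥0∞)
    (hle : ∀ x ∈ B, f x ≤ c) (hge : ∀ x ∉ B, c ≤ f x) :
    ∫⁻ x in B, f x ∂μ ≤ ∫⁻ x in S, f x ∂μ := by
  have hdiff : μ (B \ S) = μ (S \ B) := by
    have hfin' : μ (S ∩ B) ≠ ∞ := measure_ne_top_of_subset Set.inter_subset_left hfin
    refine (ENNReal.add_right_inj hfin').mp ?_
    rw [measure_inter_add_sdiff S hB, Set.inter_comm, measure_inter_add_sdiff B hS, hμ]
  calc ∫⁻ x in B, f x ∂μ = ∫⁻ x in B ∩ S, f x ∂μ + ∫⁻ x in B \ S, f x ∂μ :=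
        (lintegral_inter_add_sdiff f B hS).symm
    _ ≤ ∫⁻ x in B ∩ S, f x ∂μ + c * μ (B \ S) := by
        grw [setLIntegral_mono' (hB.diff hS) fun x hx ↦ hle x hx.1, setLIntegral_const]
    _ = ∫⁻ x in S ∩ B, f x ∂μ + c * μ (S \ B) := by rw [hdiff, Set.inter_comm]
    _ ≤ ∫⁻ x in S ∩ B, f x ∂μ + ∫⁻ x in S \ B, f x ∂μ := by
        grw [← setLIntegral_mono' (hS.diff hB) fun x hx ↦ hge x hx.2, setLIntegral_const]
    _ = ∫⁻ x in S, f x ∂μ := lintegral_inter_add_sdiff f S hB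

section NormedSpace

variable {E : Type*} [NormedAddCommGroup E] [MeasurableSpace E]

theorem setLIntegral_closedBall_norm_pow_le [OpensMeasurableSpace E] (μ : Measure E) (k : ℕ)
    {S : Set E} (hS : MeasurableSet S) {r : ℝ} (hr : 0 ≤ r)
    (hμ : μ (Metric.closedBall 0 r) = μ S) (hfin : μ S ≠ ∞) :
    ∫⁻ x in Metric.closedBall 0 r, ENNReal.ofReal (‖x‖ ^ k) ∂μ ≤
      ∫⁻ x in S, ENNReal.ofReal (‖x‖ ^ k) ∂μ := by
  refine setLIntegral_le_setLIntegral_of_measure_eq hS Metric.isClosed_closedBall.measurableSet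
    hμ hfin (ENNReal.ofReal (r ^ k)) (fun x hx ↦ ?_) (fun x hx ↦ ?_)
  · rw [mem_closedBall_zero_iff] at hx
    gcongr
  · rw [mem_closedBall_zero_iff, not_le] at hx
    gcongr

variable [NormedSpace ℝ E] [FiniteDimensional ℝ E] [BorelSpace E] [Nontrivial E]
  (μ : Measure E) [μ.IsAddHaarMeasure]

theorem integral_closedBall_norm_pow (k : ℕ) {r : ℝ} (hr : 0 ≤ r) :
    ∫ x in Metric.closedBall 0 r, ‖x‖ ^ k ∂μ =
      finrank ℝ E / (finrank ℝ E + k) * r ^ k * μ.real (Metric.closedBall 0 r) := by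
  have hradial : ∀ (m : ℕ) (y : ℝ),
      y ^ m • (Set.Iic r).indicator (· ^ k) y = (Set.Iic r).indicator (· ^ (m + k)) y := by
    intro m y
    by_cases hy : y ∈ Set.Iic r
    · rw [Set.indicator_of_mem hy, Set.indicator_of_mem hy, smul_eq_mul, pow_add]
    · rw [Set.indicator_of_notMem hy, Set.indicator_of_notMem hy, smul_zero]
  have hd : 0 < finrank ℝ E := finrank_pos
  have hdk : finrank ℝ E - 1 + k + 1 = finrank ℝ E + k := by omega
  calc ∫ x in Metric.closedBall 0 r, ‖x‖ ^ k ∂μ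
      = ∫ x, (Set.Iic r).indicator (· ^ k) ‖x‖ ∂μ := by
        rw [← integral_indicator measurableSet_closedBall]
        congr 1 with x
        by_cases hx : ‖x‖ ≤ r <;> simp [Set.indicator, hx]
    _ = finrank ℝ E * μ.real (Metric.ball 0 1) *
          ∫ y in (0 : ℝ)..r, y ^ (finrank ℝ E - 1 + k) := by
        rw [integral_fun_norm_addHaar, nsmul_eq_mul, smul_eq_mul, mul_assoc]
        simp_rw [hradial]
        rw [setIntegral_indicator measurableSet_Iic, Set.Ioi_inter_Iic,
          intervalIntegral.integral_of_le hr]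
    _ = _ := by
        have hcast : ((finrank ℝ E - 1 + k : ℕ) : ℝ) + 1 = finrank ℝ E + k := by
          exact_mod_cast hdk
        rw [integral_pow, hcast, hdk, zero_pow (by omega), sub_zero, pow_add,
          μ.addHaar_real_closedBall 0 hr]
        ring

theorem lintegral_closedBall_norm_pow (k : ℕ) {r : ℝ} (hr : 0 ≤ r) :
    ∫⁻ x in Metric.closedBall 0 r, ENNReal.ofReal (‖x‖ ^ k) ∂μ =
      ENNReal.ofReal (finrank ℝ E / (finrank ℝ E + k) * r ^ k) * μ (Metric.closedBall 0 r) := by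
  have hint : IntegrableOn (‖·‖ ^ k) (Metric.closedBall (0 : E) r) μ :=
    (continuous_norm.pow k).continuousOn.integrableOn_compact (isCompact_closedBall 0 r)
  rw [← ofReal_integral_eq_lintegral_ofReal hint (.of_forall fun x ↦ by positivity),
    integral_closedBall_norm_pow μ k hr, ENNReal.ofReal_mul (by positivity),
    ofReal_measureReal measure_closedBall_lt_top.ne]

end NormedSpace

section InnerProductSpace

variable {E : Type*} [NormedAddCommGroup E] [InnerProductSpace ℝ E] [FiniteDimensional ℝ E]
  [MeasurableSpace E] [BorelSpace E] [Nontrivial E]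

theorem volume_closedBall_zero_eq_ofReal {r : ℝ} (hr : 0 ≤ r) :
    volume (Metric.closedBall (0 : E) r) =
      ENNReal.ofReal ((√π * r) ^ finrank ℝ E / Gamma (finrank ℝ E / 2 + 1)) := by
  rw [InnerProductSpace.volume_closedBall, ← ENNReal.ofReal_pow hr,
    ← ENNReal.ofReal_mul (by positivity), mul_pow]
  ring_nf

theorem exists_volume_closedBall_eq {V : ℝ} (hV : 0 < V) :
    ∃ r, 0 ≤ r ∧ volume (Metric.closedBall (0 : E) r) = ENNReal.ofReal V := by
  have hΓ : 0 < Gamma (finrank ℝ E / 2 + 1) := Gamma_pos_of_pos (by positivity)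
  refine ⟨(V * Gamma (finrank ℝ E / 2 + 1)) ^ (finrank ℝ E : ℝ)⁻¹ / √π, by positivity, ?_⟩
  rw [volume_closedBall_zero_eq_ofReal (by positivity), mul_div_cancel₀ _ (by positivity),
    rpow_inv_natCast_pow (by positivity) finrank_pos.ne', mul_div_cancel_right₀ _ hΓ.ne']

theorem sq_eq_of_volume_closedBall_eq {r V : ℝ} (hr : 0 ≤ r) (hV : 0 < V)
    (h : volume (Metric.closedBall (0 : E) r) = ENNReal.ofReal V) :
    r ^ 2 = Gamma (finrank ℝ E / 2 + 1) ^ ((2 : ℝ) / finrank ℝ E) *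
      V ^ ((2 : ℝ) / finrank ℝ E) / π := by
  have hΓ : 0 < Gamma (finrank ℝ E / 2 + 1) := Gamma_pos_of_pos (by positivity)
  rw [volume_closedBall_zero_eq_ofReal hr, ENNReal.ofReal_eq_ofReal_iff (by positivity) hV.le,
    div_eq_iff hΓ.ne'] at h
  calc r ^ 2 = (√π * r) ^ (2 : ℝ) / π := by
        rw [rpow_two, mul_pow, sq_sqrt pi_nonneg]
        field_simp
    _ = ((√π * r) ^ finrank ℝ E) ^ ((2 : ℝ) / finrank ℝ E) / π := by
        rw [← rpow_natCast, ← rpow_mul (by positivity),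
          mul_div_cancel₀ _ (Nat.cast_ne_zero.mpr finrank_pos.ne')]
    _ = _ := by rw [h, mul_rpow hV.le hΓ.le, mul_comm]

end InnerProductSpace

/-- among measurable sets `S ⊆ ℝⁿ` of volume `V`, the origin-centered
Euclidean ball minimizes `∫_S ‖x‖² dx`; explicitly,
`∫_S ‖x‖² dx ≥ (n/(n+2))·Γ(n/2+1)^{2/n}·V^{(n+2)/n}/π`. -/
theorem ball_minimizes_second_moment {n : ℕ} (hn : 1 ≤ n)
    (S : Set (EuclideanSpace ℝ (Fin n))) (hS : MeasurableSet S)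
    (V : ℝ) (hV : 0 < V) (hvol : volume S = ENNReal.ofReal V) :
    (∀ r : ℝ, 0 < r →
      volume (Metric.closedBall (0 : EuclideanSpace ℝ (Fin n)) r) = ENNReal.ofReal V →
      ∫⁻ x in Metric.closedBall (0 : EuclideanSpace ℝ (Fin n)) r,
          ENNReal.ofReal (‖x‖ ^ 2) ≤ ∫⁻ x in S, ENNReal.ofReal (‖x‖ ^ 2)) ∧
    ENNReal.ofReal (((n : ℝ) / ((n : ℝ) + 2)) *
        Real.Gamma ((n : ℝ) / 2 + 1) ^ ((2 : ℝ) / n) * V ^ (((n : ℝ) + 2) / n) / π) ≤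
      ∫⁻ x in S, ENNReal.ofReal (‖x‖ ^ 2) := by
  have hball (r : ℝ) (hr : 0 ≤ r)
      (hB : volume (Metric.closedBall (0 : EuclideanSpace ℝ (Fin n)) r) = ENNReal.ofReal V) :=
    setLIntegral_closedBall_norm_pow_le volume 2 hS hr (hB.trans hvol.symm)
      (hvol ▸ ENNReal.ofReal_ne_top)
  refine ⟨fun r hr ↦ hball r hr.le, ?_⟩
  have : Nonempty (Fin n) := ⟨⟨0, hn⟩⟩
  obtain ⟨r, hr, hB⟩ := exists_volume_closedBall_eq (E := EuclideanSpace ℝ (Fin n)) hV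
  have hr2 := sq_eq_of_volume_closedBall_eq hr hV hB
  rw [finrank_euclideanSpace_fin] at hr2
  have hVpow : V ^ (((n : ℝ) + 2) / n) = V ^ ((2 : ℝ) / n) * V := by
    rw [add_div, div_self (by positivity), add_comm, rpow_add hV, rpow_one]
  calc ENNReal.ofReal ((n / (n + 2)) * Gamma (n / 2 + 1) ^ ((2 : ℝ) / n) *
        V ^ (((n : ℝ) + 2) / n) / π)
      = ENNReal.ofReal (n / (n + 2) * r ^ 2) * ENNReal.ofReal V := by
        rw [← ENNReal.ofReal_mul (by positivity), hr2, hVpow]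
        congr 1
        ring
    _ = ∫⁻ x in Metric.closedBall (0 : EuclideanSpace ℝ (Fin n)) r,
          ENNReal.ofReal (‖x‖ ^ 2) := by
        rw [lintegral_closedBall_norm_pow volume 2 hr, hB, finrank_euclideanSpace_fin]
        norm_cast
    _ ≤ _ := hball r hr hB
end

section
/- (Zador's lower bound.) Let G ∈ ℝ^{n×n} be invertible, let L = G·ℤⁿ be the corresponding full-rank lattice, and let 𝒱 = {x ∈ ℝⁿ : ‖x‖ ≤ ‖x − λ‖ for all λ ∈ L} be its Voronoi region around 0. Then vol(𝒱) = |det G|, and the normalized second moment per dimension σ²(L) = (1/(n·vol(𝒱)))·∫_𝒱 ‖x‖² dx satisfies σ²(L) ≥ (Γ(n/2 + 1))^{2/n} · |det G|^{2/n} / ((n+2)·π). -/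
/-!
Translates of the Voronoi cell by distinct lattice vectors meet only inside perpendicular
bisectors, which are Lebesgue-null, so the cell is a fundamental domain of the lattice and has
the volume `|det G|` of the parallelepiped spanned by the columns of `G`.

Among measurable sets of volume `v`, the centred ball `B` of volume `v` minimises `∫ ‖x‖²`
(bathtub principle): the part of a competitor outside `B` lies at radius `≥ r` and has the same
measure as the part of `B` it misses, which lies at radius `< r`. The second moment of `B` is
computed in polar coordinates: `∫_B ‖x‖² = n ω r^(n+2) / (n+2)`, where `ω` is the volume of the
unit ball and `ω r^n = v`.
-/

open MeasureTheory Real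

open Metric Module Set Submodule

section Bathtub

variable {X : Type*} [MeasurableSpace X] {μ : Measure X} {g : X → ℝ} {s t : Set X}

theorem setIntegral_le_setIntegral_of_measure_eq (c : ℝ) (hs : MeasurableSet s)
    (ht : MeasurableSet t) (hμ : μ s = μ t) (hfin : μ s ≠ ⊤) (hgs : IntegrableOn g s μ)
    (hgt : IntegrableOn g t μ) (h_le : ∀ x ∈ s \ t, g x ≤ c)
    (h_ge : ∀ x ∈ t \ s, c ≤ g x) :
    ∫ x in s, g x ∂μ ≤ ∫ x in t, g x ∂μ := by
  have hdiff : μ.real (s \ t) = μ.real (t \ s) := by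
    rw [measureReal_def, measureReal_def, measure_sdiff_symm hs.nullMeasurableSet
      ht.nullMeasurableSet hμ (measure_ne_top_of_subset inter_subset_left hfin)]
  have hfin_diff : μ (s \ t) ≠ ⊤ := measure_ne_top_of_subset sdiff_subset hfin
  have hfin_diff' : μ (t \ s) ≠ ⊤ := measure_ne_top_of_subset sdiff_subset (hμ ▸ hfin)
  calc ∫ x in s, g x ∂μ = ∫ x in s ∩ t, g x ∂μ + ∫ x in s \ t, g x ∂μ :=
        (integral_inter_add_sdiff ht hgs).symm
    _ ≤ ∫ x in s ∩ t, g x ∂μ + ∫ _ in s \ t, c ∂μ := by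
        grw [setIntegral_mono_on (hgs.mono_set sdiff_subset) (integrableOn_const hfin_diff)
          (hs.diff ht) h_le]
    _ = ∫ x in t ∩ s, g x ∂μ + c * μ.real (t \ s) := by
        rw [setIntegral_const, smul_eq_mul, hdiff, inter_comm, mul_comm]
    _ ≤ ∫ x in t ∩ s, g x ∂μ + ∫ x in t \ s, g x ∂μ := by
        grw [setIntegral_ge_of_const_le_real (ht.diff hs) hfin_diff' h_ge
          (hgt.mono_set sdiff_subset)]
    _ = ∫ x in t, g x ∂μ := integral_inter_add_sdiff hs hgt

end Bathtub

section Ball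

variable {E : Type*} [NormedAddCommGroup E] [MeasurableSpace E] [BorelSpace E]

theorem integrableOn_norm_pow_closedBall [ProperSpace E] (μ : Measure E)
    [IsFiniteMeasureOnCompacts μ] (p : ℕ) (R : ℝ) :
    IntegrableOn (fun x => ‖x‖ ^ p) (closedBall 0 R) μ :=
  (continuous_norm.pow p).continuousOn.integrableOn_compact (isCompact_closedBall 0 R)

theorem setIntegral_norm_pow_ball_le [ProperSpace E] (μ : Measure E) [IsFiniteMeasureOnCompacts μ]
    (p : ℕ) {r : ℝ} (hr : 0 ≤ r) {V : Set E} (hV : MeasurableSet V)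
    (hμV : μ V = μ (ball 0 r)) (hint : IntegrableOn (fun x => ‖x‖ ^ p) V μ) :
    ∫ x in ball 0 r, ‖x‖ ^ p ∂μ ≤ ∫ x in V, ‖x‖ ^ p ∂μ := by
  refine setIntegral_le_setIntegral_of_measure_eq (r ^ p) measurableSet_ball hV hμV.symm
    measure_ball_lt_top.ne ?_ hint (fun x hx => ?_) (fun x hx => ?_)
  · exact (integrableOn_norm_pow_closedBall μ p r).mono_set ball_subset_closedBall
  · exact pow_le_pow_left₀ (norm_nonneg x) (mem_ball_zero_iff.1 hx.1).le p
  · exact pow_le_pow_left₀ hr (not_lt.1 fun h => hx.2 (mem_ball_zero_iff.2 h)) p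

theorem integral_norm_pow_ball [NormedSpace ℝ E] [FiniteDimensional ℝ E] [Nontrivial E]
    (μ : Measure E) [μ.IsAddHaarMeasure] (p : ℕ) {r : ℝ} (hr : 0 ≤ r) :
    ∫ x in ball 0 r, ‖x‖ ^ p ∂μ =
      finrank ℝ E * μ.real (ball 0 1) * (r ^ (finrank ℝ E + p) / (finrank ℝ E + p)) := by
  have hn : finrank ℝ E - 1 + p + 1 = finrank ℝ E + p := by
    have := finrank_pos (R := ℝ) (M := E); omega
  have hradial : ∀ y : ℝ, y ^ (finrank ℝ E - 1) • (Iio r).indicator (· ^ p) y =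
      (Iio r).indicator (· ^ (finrank ℝ E - 1 + p)) y := by
    intro y
    by_cases hy : y ∈ Iio r <;> simp [hy, pow_add]
  rw [← integral_indicator measurableSet_ball]
  have hball : ∀ x : E,
      (ball 0 r).indicator (‖·‖ ^ p) x = (Iio r).indicator (· ^ p) ‖x‖ := by
    intro x
    by_cases hx : ‖x‖ < r <;> simp [indicator, hx]
  simp_rw [hball]
  rw [integral_fun_norm_addHaar μ, nsmul_eq_mul, smul_eq_mul, mul_assoc]
  simp_rw [hradial]
  rw [setIntegral_indicator measurableSet_Iio, Ioi_inter_Iio, ← integral_Ioc_eq_integral_Ioo,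
    ← intervalIntegral.integral_of_le hr, integral_pow, hn, zero_pow (by omega), sub_zero,
    ← Nat.cast_succ, Nat.succ_eq_add_one, hn, Nat.cast_add]

end Ball

section SecondMoment

variable {E : Type*} [NormedAddCommGroup E] [InnerProductSpace ℝ E] [FiniteDimensional ℝ E]
  [MeasurableSpace E] [BorelSpace E] [Nontrivial E]

theorem zador_bound_le_of_volume_eq {n : ℕ} (hn : finrank ℝ E = n) {V : Set E}
    (hV : MeasurableSet V) (hint : IntegrableOn (fun x => ‖x‖ ^ 2) V) {v : ℝ} (hv : 0 < v)
    (hvol : volume V = ENNReal.ofReal v) :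
    Gamma ((n : ℝ) / 2 + 1) ^ ((2 : ℝ) / n) * v ^ ((2 : ℝ) / n) / (((n : ℝ) + 2) * π) ≤
      (1 / ((n : ℝ) * v)) * ∫ x in V, ‖x‖ ^ 2 := by
  have hn0 : (n : ℝ) ≠ 0 := by rw [← hn]; exact_mod_cast finrank_pos.ne'
  have hΓ : 0 < Gamma ((n : ℝ) / 2 + 1) := Gamma_pos_of_pos (by positivity)
  set ω : ℝ := √π ^ n / Gamma ((n : ℝ) / 2 + 1) with hω
  have hω0 : 0 < ω := by positivity
  set r : ℝ := (v / ω) ^ ((1 : ℝ) / n)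
  have hr0 : 0 < r := by positivity
  -- `ω` is the volume of the unit ball, so `r` is the radius of the ball of volume `v`
  have hrn : r ^ n * ω = v := by
    rw [← rpow_natCast, ← rpow_mul (by positivity), one_div_mul_cancel hn0, rpow_one,
      div_mul_cancel₀ _ hω0.ne']
  have hr2 : r ^ 2 = Gamma ((n : ℝ) / 2 + 1) ^ ((2 : ℝ) / n) * v ^ ((2 : ℝ) / n) / π := by
    have hπ : (√π ^ n) ^ ((2 : ℝ) / n) = π := by
      rw [← rpow_natCast, ← rpow_mul (sqrt_nonneg π), mul_div_cancel₀ _ hn0, rpow_two,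
        sq_sqrt pi_pos.le]
    rw [← rpow_natCast, ← rpow_mul (by positivity), Nat.cast_ofNat, one_div_mul_eq_div,
      div_rpow hv.le hω0.le, hω, div_rpow (by positivity) hΓ.le, hπ]
    field_simp
  have hball : ∀ ρ, 0 ≤ ρ → volume (ball (0 : E) ρ) = ENNReal.ofReal (ρ ^ n * ω) := by
    intro ρ hρ
    rw [InnerProductSpace.volume_ball, hn, ← ENNReal.ofReal_pow hρ,
      ← ENNReal.ofReal_mul (by positivity)]
  have hmoment : ∫ x in ball (0 : E) r, ‖x‖ ^ 2 = n * v * (r ^ 2 / (n + 2)) := by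
    rw [integral_norm_pow_ball volume 2 hr0.le, hn, measureReal_def, hball 1 zero_le_one,
      one_pow, one_mul, ENNReal.toReal_ofReal hω0.le, pow_add, ← hrn]
    push_cast
    ring
  calc Gamma ((n : ℝ) / 2 + 1) ^ ((2 : ℝ) / n) * v ^ ((2 : ℝ) / n) / (((n : ℝ) + 2) * π)
      = 1 / (n * v) * ∫ x in ball (0 : E) r, ‖x‖ ^ 2 := by
        rw [hmoment, hr2]
        field_simp
    _ ≤ 1 / (n * v) * ∫ x in V, ‖x‖ ^ 2 := by
        grw [setIntegral_norm_pow_ball_le volume 2 hr0.le hV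
          (by rw [hvol, hball r hr0.le, hrn]) hint]

end SecondMoment

def voronoiCell {E : Type*} [NormedAddCommGroup E] (L : Set E) : Set E :=
  {x | ∀ y ∈ L, ‖x‖ ≤ ‖x - y‖}

section Voronoi

variable {E : Type*} [NormedAddCommGroup E]

theorem isClosed_voronoiCell (L : Set E) : IsClosed (voronoiCell L) := by
  simp only [voronoiCell, ofPred_forall]
  exact isClosed_biInter fun y _ => isClosed_le continuous_norm (continuous_sub_right y).norm

theorem exists_sub_mem_voronoiCell [ProperSpace E] (L : AddSubgroup E) (hL : IsClosed (L : Set E))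
    (x : E) : ∃ y ∈ L, x - y ∈ voronoiCell L := by
  obtain ⟨y, hyL, hy⟩ := hL.exists_infDist_eq_dist ⟨0, L.zero_mem⟩ x
  refine ⟨y, hyL, fun w hw => ?_⟩
  calc ‖x - y‖ = infDist x L := by rw [hy, dist_eq_norm]
    _ ≤ dist x (y + w) := infDist_le_dist_of_mem (L.add_mem hyL hw)
    _ = ‖x - y - w‖ := by rw [dist_eq_norm, sub_sub]

theorem norm_sub_eq_of_sub_mem_voronoiCell (L : AddSubgroup E) {x g g' : E} (hg : g ∈ L)
    (hg' : g' ∈ L) (hx : x - g ∈ voronoiCell L) (hx' : x - g' ∈ voronoiCell L) :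
    ‖x - g‖ = ‖x - g'‖ := by
  have h₁ := hx (g' - g) (L.sub_mem hg' hg)
  have h₂ := hx' (g - g') (L.sub_mem hg hg')
  rw [sub_sub_sub_cancel_right] at h₁ h₂
  exact h₁.antisymm h₂

end Voronoi

section FundamentalDomain

variable {E : Type*} [NormedAddCommGroup E] [InnerProductSpace ℝ E] [FiniteDimensional ℝ E]
  [MeasurableSpace E] [BorelSpace E]

theorem isAddFundamentalDomain_voronoiCell (L : Submodule ℤ E) [DiscreteTopology L]
    (μ : Measure E) [μ.IsAddHaarMeasure] :
    IsAddFundamentalDomain L (voronoiCell (L : Set E)) μ where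
  nullMeasurableSet := (isClosed_voronoiCell _).measurableSet.nullMeasurableSet
  ae_covers := Filter.Eventually.of_forall fun x => by
    obtain ⟨y, hyL, hy⟩ := exists_sub_mem_voronoiCell L.toAddSubgroup
      AddSubgroup.isClosed_of_discrete x
    refine ⟨-⟨y, hyL⟩, ?_⟩
    rwa [Submodule.vadd_def, vadd_eq_add, Submodule.coe_neg, neg_add_eq_sub]
  aedisjoint g g' hgg' := by
    refine measure_mono_null (fun x ⟨hx, hx'⟩ => ?_) (Measure.addHaar_affineSubspace μ
      (AffineSubspace.perpBisector (g : E) g') (by simpa using hgg'))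
    rw [mem_vadd_set_iff_neg_vadd_mem, Submodule.vadd_def, vadd_eq_add, Submodule.coe_neg,
      neg_add_eq_sub] at hx hx'
    rw [SetLike.mem_coe, AffineSubspace.mem_perpBisector_iff_dist_eq, dist_eq_norm, dist_eq_norm]
    exact norm_sub_eq_of_sub_mem_voronoiCell L.toAddSubgroup g.2 g'.2 hx hx'

theorem measure_voronoiCell_span {ι : Type*} [Finite ι] (b : Basis ι ℝ E) (μ : Measure E)
    [μ.IsAddHaarMeasure] :
    μ (voronoiCell (span ℤ (range b) : Set E)) = μ (ZSpan.fundamentalDomain b) :=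
  have : VAddInvariantMeasure (span ℤ (range b)) E μ :=
    inferInstanceAs (VAddInvariantMeasure (span ℤ (range b)).toAddSubgroup E μ)
  (isAddFundamentalDomain_voronoiCell _ μ).measure_eq (ZSpan.isAddFundamentalDomain b μ)

end FundamentalDomain

theorem voronoiCell_span_subset_closedBall {E ι : Type*} [NormedAddCommGroup E] [NormedSpace ℝ E]
    [Fintype ι] (b : Basis ι ℝ E) :
    voronoiCell (span ℤ (range b) : Set E) ⊆ closedBall 0 (∑ i, ‖b i‖) := fun x hx => by
  rw [mem_closedBall_zero_iff]
  calc ‖x‖ ≤ ‖x - ZSpan.floor b x‖ := hx _ (ZSpan.floor b x).2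
    _ ≤ ∑ i, ‖b i‖ := ZSpan.norm_fract_le b x

section ColumnLattice

variable {ι : Type*} [Fintype ι] [DecidableEq ι] (G : Matrix ι ι ℝ) [Invertible G]

noncomputable def Matrix.euclideanColumnBasis : Basis ι ℝ (EuclideanSpace ℝ ι) :=
  ((Pi.basisFun ℝ ι).map (G.toLinearEquiv' ‹_›)).map (WithLp.linearEquiv 2 ℝ (ι → ℝ)).symm

theorem Matrix.coe_span_euclideanColumnBasis :
    (span ℤ (range G.euclideanColumnBasis) : Set (EuclideanSpace ℝ ι)) =
      range fun z : ι → ℤ => (WithLp.equiv 2 (ι → ℝ)).symm (G.mulVec fun i => (z i : ℝ)) := by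
  ext y
  set φ := (G.toLinearEquiv' ‹_›).trans (WithLp.linearEquiv 2 ℝ (ι → ℝ)).symm
  have hφ : ∀ v, φ v = (WithLp.equiv 2 (ι → ℝ)).symm (G.mulVec v) := fun _ => rfl
  simp only [SetLike.mem_coe, Basis.mem_span_iff_repr_mem, Matrix.euclideanColumnBasis,
    Basis.map_repr, LinearEquiv.trans_apply, Pi.basisFun_repr, mem_range, ← hφ]
  rw [Classical.skolem]
  refine exists_congr fun z => ?_
  simp only [algebraMap_int_eq, eq_intCast, ← funext_iff]
  exact φ.eq_symm_apply

theorem Matrix.volume_fundamentalDomain_euclideanColumnBasis :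
    volume (ZSpan.fundamentalDomain G.euclideanColumnBasis) = ENNReal.ofReal |G.det| := by
  rw [Matrix.euclideanColumnBasis, ← ZSpan.map_fundamentalDomain,
    LinearEquiv.image_eq_preimage_symm, LinearEquiv.symm_symm, WithLp.coe_linearEquiv,
    (PiLp.volume_preserving_ofLp ι).measure_preimage
      (ZSpan.fundamentalDomain_measurableSet _).nullMeasurableSet,
    ZSpan.volume_fundamentalDomain]
  have hcols : Matrix.of ((Pi.basisFun ℝ ι).map (G.toLinearEquiv' ‹_›)) = G.transpose := by
    ext i j
    rw [Matrix.of_apply, Basis.map_apply, Pi.basisFun_apply, Matrix.transpose_apply]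
    change G.mulVec (Pi.single i 1) j = G j i
    rw [Matrix.mulVec_single_one, Matrix.col_apply]
  rw [hcols, Matrix.det_transpose]

end ColumnLattice

/-- Zador's lower bound: for the full-rank lattice `L = G·ℤⁿ` with
Voronoi region `𝒱` around `0`, one has `vol(𝒱) = |det G|` and the normalized second
moment `σ²(L) = (1/(n·vol 𝒱))·∫_𝒱 ‖x‖²` satisfies
`σ²(L) ≥ Γ(n/2+1)^{2/n}·|det G|^{2/n}/((n+2)π)`. -/
theorem zador_lower_bound {n : ℕ} (hn : 1 ≤ n)
    (G : Matrix (Fin n) (Fin n) ℝ) (hG : G.det ≠ 0)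
    (Vor : Set (EuclideanSpace ℝ (Fin n)))
    (hVor : Vor = {x : EuclideanSpace ℝ (Fin n) | ∀ z : Fin n → ℤ,
      ‖x‖ ≤ ‖x - (WithLp.equiv 2 (Fin n → ℝ)).symm (G.mulVec fun i => (z i : ℝ))‖}) :
    volume Vor = ENNReal.ofReal |G.det| ∧
    Real.Gamma ((n : ℝ) / 2 + 1) ^ ((2 : ℝ) / n) * |G.det| ^ ((2 : ℝ) / n) /
        (((n : ℝ) + 2) * π) ≤
      (1 / ((n : ℝ) * |G.det|)) * ∫ x in Vor, ‖x‖ ^ 2 := by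
  have : Invertible G := G.invertibleOfIsUnitDet hG.isUnit
  have : Nonempty (Fin n) := ⟨⟨0, hn⟩⟩
  have hVor_cell : Vor = voronoiCell (span ℤ (range G.euclideanColumnBasis) : Set _) := by
    rw [hVor, G.coe_span_euclideanColumnBasis]
    simp only [voronoiCell, forall_mem_range]
  have hvol : volume Vor = ENNReal.ofReal |G.det| := by
    rw [hVor_cell, measure_voronoiCell_span, G.volume_fundamentalDomain_euclideanColumnBasis]
  refine ⟨hvol, zador_bound_le_of_volume_eq finrank_euclideanSpace_fin ?_ ?_
    (abs_pos.2 hG) hvol⟩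
  · exact hVor_cell ▸ (isClosed_voronoiCell _).measurableSet
  · exact (integrableOn_norm_pow_closedBall volume 2 _).mono_set
      (hVor_cell ▸ voronoiCell_span_subset_closedBall _)
end

section
/- (Reverse waterfilling optimality.) Let n ≥ 1, let λ_1,…,λ_n > 0, let σ² > 0, and let τ > 0. Define R*(τ) = (1/(2n))·Σ_{i=1}^n log₂ max(1, λ_i/τ) and D*(τ) = (σ²/n)·Σ_{i=1}^n min(λ_i, τ). Then for every choice of D_1,…,D_n with 0 < D_i ≤ σ² for all i and (1/(2n))·Σ_{i=1}^n log₂(σ²/D_i) ≤ R*(τ), one has (1/n)·Σ_{i=1}^n λ_i D_i ≥ D*(τ). Moreover, the choice D_i = σ²·min(1, τ/λ_i) satisfies 0 < D_i ≤ σ², achieves (1/(2n))·Σ_i log₂(σ²/D_i) = R*(τ), and attains (1/n)·Σ_i λ_i D_i = D*(τ). -/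
open Finset Real

/-!
A Lagrangian argument with multiplier `τ`: by `log y ≤ y - 1`, every coordinate satisfies
`τ · (log max(1, λ/τ) - log(σ²/D)) ≤ λ D/σ² - min(λ, τ)`, with equality at the waterfilling
choice `D = σ² min(1, τ/λ)`. Summing, the rate constraint makes the left side nonnegative.
-/

lemma mul_log_max_add_log_le {lam τ x : ℝ} (hlam : 0 < lam) (hτ : 0 < τ) (hx : 0 < x)
    (hx1 : x ≤ 1) :
    τ * (log (max 1 (lam / τ)) + log x) ≤ lam * x - min lam τ := by
  rcases le_or_gt lam τ with h | h
  · rw [max_eq_left ((div_le_one hτ).mpr h), min_eq_left h, log_one, zero_add]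
    nlinarith [log_le_sub_one_of_pos hx]
  · rw [max_eq_right ((one_le_div hτ).mpr h.le), min_eq_right h.le,
      ← log_mul (by positivity) hx.ne']
    have hlog := log_le_sub_one_of_pos (show 0 < lam / τ * x by positivity)
    calc τ * log (lam / τ * x) ≤ τ * (lam / τ * x - 1) := by gcongr
      _ = lam * x - τ := by field_simp

lemma sum_min_le_of_sum_log_le {ι : Type*} [Fintype ι] {lam D : ι → ℝ} {σ2 τ : ℝ}
    (hlam : ∀ i, 0 < lam i) (hτ : 0 < τ) (hσ2 : 0 < σ2) (hD : ∀ i, 0 < D i)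
    (hDσ2 : ∀ i, D i ≤ σ2)
    (hrate : ∑ i, log (σ2 / D i) ≤ ∑ i, log (max 1 (lam i / τ))) :
    σ2 * ∑ i, min (lam i) τ ≤ ∑ i, lam i * D i := by
  have hcoord : ∀ i, τ * (log (max 1 (lam i / τ)) - log (σ2 / D i)) ≤
      lam i * (D i / σ2) - min (lam i) τ := fun i => by
    have h := mul_log_max_add_log_le (hlam i) hτ (div_pos (hD i) hσ2)
      ((div_le_one hσ2).mpr (hDσ2 i))
    rw [log_div (hD i).ne' hσ2.ne'] at h
    rw [log_div hσ2.ne' (hD i).ne']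
    linarith
  have hsum := sum_le_sum fun i (_ : i ∈ univ) => hcoord i
  rw [← mul_sum, sum_sub_distrib, sum_sub_distrib] at hsum
  have hgap : 0 ≤ τ * (∑ i, log (max 1 (lam i / τ)) - ∑ i, log (σ2 / D i)) :=
    mul_nonneg hτ.le (sub_nonneg.mpr hrate)
  have hnorm : ∑ i, lam i * (D i / σ2) = (∑ i, lam i * D i) / σ2 := by
    simp only [mul_div_assoc', sum_div]
  rw [hnorm] at hsum
  rw [← le_div_iff₀' hσ2]
  linarith

lemma inv_min_one_div {a b : ℝ} (ha : 0 < a) (hb : 0 < b) :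
    (min 1 (b / a))⁻¹ = max 1 (a / b) := by
  rcases le_or_gt a b with h | h
  · rw [min_eq_left ((one_le_div ha).mpr h), max_eq_left ((div_le_one hb).mpr h), inv_one]
  · rw [min_eq_right ((div_le_one ha).mpr h.le), max_eq_right ((one_le_div hb).mpr h.le),
      inv_div]

lemma mul_min_one_div {a : ℝ} (ha : 0 < a) (b : ℝ) : a * min 1 (b / a) = min a b := by
  rw [mul_min_of_nonneg _ _ ha.le, mul_one, mul_div_cancel₀ _ ha.ne']

/-- reverse waterfilling optimality: for any per-coordinate distortions
`0 < D_i ≤ σ²` whose rate `(1/(2n))·Σ_i log₂(σ²/D_i)` is at most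
`R*(τ) = (1/(2n))·Σ_i log₂ max(1, λ_i/τ)`, the weighted distortion `(1/n)·Σ_i λ_i D_i`
is at least `D*(τ) = (σ²/n)·Σ_i min(λ_i, τ)`; moreover the choice
`D_i = σ²·min(1, τ/λ_i)` is feasible, meets the rate with equality, and attains `D*(τ)`. -/
theorem reverse_waterfilling_optimality {n : ℕ} (hn : 1 ≤ n)
    (lam : Fin n → ℝ) (hlam : ∀ i, 0 < lam i)
    (σ2 : ℝ) (hσ2 : 0 < σ2) (τ : ℝ) (hτ : 0 < τ) :
    (∀ D : Fin n → ℝ, (∀ i, 0 < D i) → (∀ i, D i ≤ σ2) →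
      (1 / (2 * (n : ℝ))) * ∑ i, Real.logb 2 (σ2 / D i) ≤
        (1 / (2 * (n : ℝ))) * ∑ i, Real.logb 2 (max 1 (lam i / τ)) →
      (σ2 / (n : ℝ)) * ∑ i, min (lam i) τ ≤ (1 / (n : ℝ)) * ∑ i, lam i * D i) ∧
    (∀ i, 0 < σ2 * min 1 (τ / lam i)) ∧
    (∀ i, σ2 * min 1 (τ / lam i) ≤ σ2) ∧
    ((1 / (2 * (n : ℝ))) * ∑ i, Real.logb 2 (σ2 / (σ2 * min 1 (τ / lam i))) =
      (1 / (2 * (n : ℝ))) * ∑ i, Real.logb 2 (max 1 (lam i / τ))) ∧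
    ((1 / (n : ℝ)) * ∑ i, lam i * (σ2 * min 1 (τ / lam i)) =
      (σ2 / (n : ℝ)) * ∑ i, min (lam i) τ) := by
  have hn' : (0 : ℝ) < n := by exact_mod_cast hn
  refine ⟨fun D hD hDσ2 hR => ?_, fun i => ?_, fun i => ?_, ?_, ?_⟩
  · have hrate : ∑ i, log (σ2 / D i) ≤ ∑ i, log (max 1 (lam i / τ)) := by
      simp only [logb, ← sum_div] at hR
      exact (div_le_div_iff_of_pos_right (log_pos one_lt_two)).mp
        (le_of_mul_le_mul_left hR (by positivity))
    rw [div_mul_eq_mul_div, one_div_mul_eq_div]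
    exact div_le_div_of_nonneg_right
      (sum_min_le_of_sum_log_le hlam hτ hσ2 hD hDσ2 hrate) hn'.le
  · exact mul_pos hσ2 (lt_min one_pos (div_pos hτ (hlam i)))
  · exact mul_le_of_le_one_right hσ2.le (min_le_left _ _)
  · simp only [div_mul_cancel_left₀ hσ2.ne', inv_min_one_div (hlam _) hτ]
  · simp only [mul_left_comm (lam _), mul_min_one_div (hlam _), ← mul_sum]
    ring
end

section
/- Let n ≥ 1, λ_1,…,λ_n > 0, and σ² > 0. Define for T > 0 the parametric distortion D(T) = (σ²/n)·Σ_{i=1}^n λ_i/(1 + λ_i T) and rate R(T) = (1/(2n))·Σ_{i=1}^n log₂(1 + λ_i T). Then lim_{T→∞} D(T)·2^{2R(T)} = σ²·(∏_{i=1}^n λ_i)^{1/n}. In other words, in the high-rate limit the scheme with isotropic codebook and Σ_X-aware encoding attains distortion |Σ_X|^{1/n}·σ²·2^{−2R} to first order, where λ_1,…,λ_n are the eigenvalues of Σ_X. -/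
open Finset Real Filter Topology

/-!
The factor `2^{2R(T)}` is the geometric mean `G(1 + λT)` of the numbers `1 + λⱼ T`, and by
homogeneity of `G` it equals `T · G(T⁻¹ + λ)`. Hence
`D(T) 2^{2R(T)} = (σ²/n) Σᵢ (λᵢ T / (1 + λᵢ T)) · G(T⁻¹ + λ)`; each fraction tends to `1` and,
by continuity, `G(T⁻¹ + λ) → G(λ) = (∏ᵢ λᵢ)^{1/n}`.
-/

noncomputable def geomMean {ι : Type*} [Fintype ι] (x : ι → ℝ) : ℝ :=
  (∏ i, x i) ^ ((1 : ℝ) / Fintype.card ι)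

section GeomMean

variable {ι : Type*} [Fintype ι]

theorem continuous_geomMean : Continuous (geomMean : (ι → ℝ) → ℝ) :=
  (continuous_finsetProd _ fun i _ => continuous_apply i).rpow_const
    fun _ => Or.inr (by positivity)

theorem geomMean_const_mul [Nonempty ι] {c : ℝ} (hc : 0 ≤ c) {x : ι → ℝ}
    (hx : ∀ i, 0 ≤ x i) : geomMean (fun i => c * x i) = c * geomMean x := by
  rw [geomMean, geomMean, prod_mul_distrib, prod_const, card_univ,
    mul_rpow (pow_nonneg hc _) (prod_nonneg fun i _ => hx i), one_div,
    pow_rpow_inv_natCast hc Fintype.card_ne_zero]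

theorem rpow_mul_sum_logb_eq_geomMean {b : ℝ} (hb : 0 < b) (hb1 : b ≠ 1) {x : ι → ℝ}
    (hx : ∀ i, 0 < x i) :
    b ^ ((1 : ℝ) / Fintype.card ι * ∑ i, logb b (x i)) = geomMean x := by
  rw [← logb_prod _ _ fun i _ => (hx i).ne', mul_comm, rpow_mul hb.le,
    rpow_logb hb hb1 (prod_pos fun i _ => hx i), geomMean]

end GeomMean

theorem tendsto_mul_div_one_add_mul_atTop {a : ℝ} (ha : 0 < a) :
    Tendsto (fun T : ℝ => a * T / (1 + a * T)) atTop (𝓝 1) := by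
  have hden : Tendsto (fun T : ℝ => 1 + a * T) atTop atTop :=
    tendsto_atTop_add_const_left _ _ (tendsto_id.const_mul_atTop ha)
  have hlim : Tendsto (fun T : ℝ => 1 - (1 + a * T)⁻¹) atTop (𝓝 (1 - 0)) :=
    tendsto_const_nhds.sub hden.inv_tendsto_atTop
  rw [sub_zero] at hlim
  refine hlim.congr' ?_
  filter_upwards [hden.eventually_gt_atTop 0] with T hT
  field_simp
  ring

theorem distortion_mul_two_rpow_rate_eq {n : ℕ} [NeZero n] (lam : Fin n → ℝ)
    (hlam : ∀ i, 0 < lam i) (σ2 : ℝ) {T : ℝ} (hT : 0 < T) :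
    ((σ2 / (n : ℝ)) * ∑ i, lam i / (1 + lam i * T)) *
        (2 : ℝ) ^ (2 * ((1 / (2 * (n : ℝ))) * ∑ i, Real.logb 2 (1 + lam i * T))) =
      σ2 / n * ∑ i, lam i * T / (1 + lam i * T) * geomMean (fun j => T⁻¹ + lam j) := by
  have hpos : ∀ i, 0 < 1 + lam i * T := fun i => by have := hlam i; positivity
  have hG : geomMean (fun j => 1 + lam j * T) = T * geomMean (fun j => T⁻¹ + lam j) := by
    rw [← geomMean_const_mul hT.le fun j => by have := hlam j; positivity]
    congr 1
    funext j
    field_simp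
  have hexp : 2 * (1 / (2 * (n : ℝ))) = 1 / Fintype.card (Fin n) := by
    rw [Fintype.card_fin]
    field_simp
  rw [← mul_assoc 2, hexp, rpow_mul_sum_logb_eq_geomMean two_pos (by norm_num) hpos, hG,
    mul_assoc, sum_mul]
  congr 1
  refine sum_congr rfl fun i _ => ?_
  ring

theorem isotropic_codebook_highrate_limit_general {n : ℕ} (hn : 1 ≤ n)
    (lam : Fin n → ℝ) (hlam : ∀ i, 0 < lam i) (σ2 : ℝ) :
    Tendsto (fun T : ℝ =>
        ((σ2 / (n : ℝ)) * ∑ i, lam i / (1 + lam i * T)) *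
          (2 : ℝ) ^ (2 * ((1 / (2 * (n : ℝ))) * ∑ i, Real.logb 2 (1 + lam i * T))))
      atTop (nhds (σ2 * (∏ i, lam i) ^ ((1 : ℝ) / n))) := by
  have : NeZero n := ⟨by omega⟩
  have hG : Tendsto (fun T : ℝ => geomMean fun j => T⁻¹ + lam j) atTop (𝓝 (geomMean lam)) := by
    refine (continuous_geomMean.tendsto lam).comp (tendsto_pi_nhds.2 fun j => ?_)
    simpa using tendsto_inv_atTop_zero.add_const (lam j)
  have hsum := (tendsto_finsetSum univ fun i _ =>
    (tendsto_mul_div_one_add_mul_atTop (hlam i)).mul hG).const_mul (σ2 / n)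
  have hlim : σ2 / n * ∑ _i : Fin n, 1 * geomMean lam = σ2 * (∏ i, lam i) ^ ((1 : ℝ) / n) := by
    simp only [one_mul, sum_const, card_univ, Fintype.card_fin, nsmul_eq_mul, geomMean]
    field_simp
  rw [← hlim]
  refine hsum.congr' ?_
  filter_upwards [eventually_gt_atTop 0] with T hT
  exact (distortion_mul_two_rpow_rate_eq lam hlam σ2 hT).symm

/-- with `D(T) = (σ²/n)·Σ_i λ_i/(1+λ_i T)` and
`R(T) = (1/(2n))·Σ_i log₂(1+λ_i T)`, one has
`lim_{T→∞} D(T)·2^{2R(T)} = σ²·(∏_i λ_i)^{1/n}`: in the high-rate limit the isotropic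
codebook with `Σ_X`-aware encoding attains distortion `|Σ_X|^{1/n}·σ²·2^{−2R}` to first
order. -/
theorem isotropic_codebook_highrate_limit {n : ℕ} (hn : 1 ≤ n)
    (lam : Fin n → ℝ) (hlam : ∀ i, 0 < lam i) (σ2 : ℝ) (hσ2 : 0 < σ2) :
    Tendsto (fun T : ℝ =>
        ((σ2 / (n : ℝ)) * ∑ i, lam i / (1 + lam i * T)) *
          (2 : ℝ) ^ (2 * ((1 / (2 * (n : ℝ))) * ∑ i, Real.logb 2 (1 + lam i * T))))
      atTop (nhds (σ2 * (∏ i, lam i) ^ ((1 : ℝ) / n))) :=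
  isotropic_codebook_highrate_limit_general hn lam hlam σ2
end

section
/- (Shrinkage identity for dithered quantization.) Let n ≥ 1, let U ∈ ℝ^{n×n} be invertible, and let X, W, e be mutually independent ℝⁿ-valued random vectors with finite second moments such that E[X] = 0, E[X Xᵀ] = UᵀU =: Σ_X, E[W Wᵀ] = σ_W²·I_n, and E[e] = 0. For β ∈ ℝ set Ŵ = β·(W + U^{−1}e). Then (1/n)·E[(Xᵀ(W − Ŵ))²] = (1−β)²·σ_W²·tr(Σ_X)/n + β²·(1/n)·E[‖e‖²]. -/
/-!
Put `Y = W - Ŵ = (1 - β) W - β U⁻¹ e`. As `X` is independent of `Y`, the mean square of `Xᵀ Y`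
is `tr (Σ_X Σ_Y)` with uncentred second-moment matrices. The cross terms of `Σ_Y` vanish because
`W` and `e` are independent and `e` is centred, so `Σ_Y = (1 - β)² σ_W² I + β² U⁻¹ Σ_e U⁻ᵀ`, and
`Σ_X = UᵀU` turns the second summand into `β² tr Σ_e = β² E ‖e‖²`.
-/

open MeasureTheory ProbabilityTheory Finset Matrix

namespace Matrix

variable {ι R : Type*} [Fintype ι] [DecidableEq ι] [CommRing R]

theorem trace_transpose_mul_self_mul_inv_conj {U : Matrix ι ι R} (hU : IsUnit U.det)
    (S : Matrix ι ι R) : (Uᵀ * U * (U⁻¹ * S * U⁻¹ᵀ)).trace = S.trace :=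
  calc (Uᵀ * U * (U⁻¹ * S * U⁻¹ᵀ)).trace = (Uᵀ * (U * U⁻¹) * S * U⁻¹ᵀ).trace := by
        simp only [Matrix.mul_assoc]
    _ = (S * (U⁻¹ᵀ * Uᵀ)).trace := by
        rw [U.mul_nonsing_inv hU, Matrix.mul_one, Matrix.mul_assoc, trace_mul_comm,
          Matrix.mul_assoc]
    _ = S.trace := by
        rw [← transpose_mul, U.mul_nonsing_inv hU, transpose_one, Matrix.mul_one]

end Matrix

namespace ProbabilityTheory

variable {Ω ι κ : Type*} [MeasurableSpace Ω] {μ : Measure Ω}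

noncomputable def secondMoment (μ : Measure Ω) (V : Ω → ι → ℝ) : Matrix ι ι ℝ :=
  Matrix.of fun i j => ∫ ω, V ω i * V ω j ∂μ

theorem secondMoment_apply (V : Ω → ι → ℝ) (i j : ι) :
    secondMoment μ V i j = ∫ ω, V ω i * V ω j ∂μ := rfl

theorem secondMoment_smul (c : ℝ) (V : Ω → ι → ℝ) :
    secondMoment μ (fun ω => c • V ω) = c ^ 2 • secondMoment μ V := by
  ext i j
  simp only [secondMoment_apply, Pi.smul_apply, smul_eq_mul, Matrix.smul_apply]
  rw [← integral_const_mul]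
  congr with ω
  ring

theorem secondMoment_add_of_indepFun {A B : Ω → ι → ℝ}
    (hA : ∀ i, MemLp (fun ω => A ω i) 2 μ) (hB : ∀ i, MemLp (fun ω => B ω i) 2 μ)
    (hAB : IndepFun A B μ) (hB0 : ∀ i, ∫ ω, B ω i ∂μ = 0) :
    secondMoment μ (A + B) = secondMoment μ A + secondMoment μ B := by
  have hcross (i j : ι) : ∫ ω, A ω i * B ω j ∂μ = 0 := by
    have hij : IndepFun (fun ω => A ω i) (fun ω => B ω j) μ :=
      hAB.comp (measurable_pi_apply i) (measurable_pi_apply j)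
    rw [hij.integral_fun_mul_eq_mul_integral (hA i).aestronglyMeasurable
      (hB j).aestronglyMeasurable, hB0, mul_zero]
  have hint {f g : Ω → ℝ} (hf : MemLp f 2 μ) (hg : MemLp g 2 μ) :
      Integrable (fun ω => f ω * g ω) μ := hf.integrable_mul hg
  ext i j
  have hexpand (ω : Ω) : (A + B) ω i * (A + B) ω j
      = A ω i * A ω j + (A ω i * B ω j + A ω j * B ω i) + B ω i * B ω j := by
    simp only [Pi.add_apply]; ring
  simp only [secondMoment_apply, Matrix.add_apply, hexpand]
  rw [integral_add ((hint (hA i) (hA j)).fun_add ((hint (hA i) (hB j)).fun_add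
      (hint (hA j) (hB i)))) (hint (hB i) (hB j)), integral_add (hint (hA i) (hA j))
      ((hint (hA i) (hB j)).fun_add (hint (hA j) (hB i))),
    integral_add (hint (hA i) (hB j)) (hint (hA j) (hB i)), hcross, hcross]
  ring

variable [Fintype ι]

theorem trace_secondMoment {V : Ω → ι → ℝ} (hV : ∀ i, MemLp (fun ω => V ω i) 2 μ) :
    (secondMoment μ V).trace = ∫ ω, ∑ i, V ω i ^ 2 ∂μ := by
  rw [integral_finsetSum _ fun i _ => (hV i).integrable_sq]
  simp [Matrix.trace, secondMoment, sq]

theorem memLp_mulVec_apply {p : ENNReal} (M : Matrix κ ι ℝ) {V : Ω → ι → ℝ}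
    (hV : ∀ i, MemLp (fun ω => V ω i) p μ) (k : κ) : MemLp (fun ω => (M *ᵥ V ω) k) p μ := by
  simp only [Matrix.mulVec, dotProduct]
  exact memLp_finsetSum _ fun i _ => (hV i).const_mul _

theorem integral_mulVec_apply (M : Matrix κ ι ℝ) {V : Ω → ι → ℝ}
    (hV : ∀ i, Integrable (fun ω => V ω i) μ) (k : κ) :
    ∫ ω, (M *ᵥ V ω) k ∂μ = (M *ᵥ fun i => ∫ ω, V ω i ∂μ) k := by
  simp only [Matrix.mulVec, dotProduct]
  rw [integral_finsetSum _ fun i _ => (hV i).const_mul _]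
  simp only [integral_const_mul]

theorem secondMoment_mulVec (M : Matrix κ ι ℝ) {V : Ω → ι → ℝ}
    (hV : ∀ i, MemLp (fun ω => V ω i) 2 μ) :
    secondMoment μ (fun ω => M *ᵥ V ω) = M * secondMoment μ V * Mᵀ := by
  ext k l
  have hexpand (ω : Ω) : (M *ᵥ V ω) k * (M *ᵥ V ω) l
      = ∑ j, ∑ i, M k i * M l j * (V ω i * V ω j) := by
    simp only [Matrix.mulVec, dotProduct, sum_mul_sum]
    rw [sum_comm]
    exact sum_congr rfl fun j _ => sum_congr rfl fun i _ => by ring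
  have hint (i j : ι) : Integrable (fun ω => M k i * M l j * (V ω i * V ω j)) μ :=
    ((hV i).integrable_mul (hV j)).const_mul _
  simp only [secondMoment_apply, hexpand, Matrix.mul_apply, Matrix.transpose_apply, sum_mul]
  rw [integral_finsetSum _ fun j _ => integrable_finsetSum _ fun i _ => hint i j]
  refine sum_congr rfl fun j _ => ?_
  rw [integral_finsetSum _ fun i _ => hint i j]
  refine sum_congr rfl fun i _ => ?_
  rw [integral_const_mul]
  ring

theorem secondMoment_smul_add_smul_mulVec_of_indepFun {W : Ω → κ → ℝ} {e : Ω → ι → ℝ}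
    [IsFiniteMeasure μ] (hW : ∀ k, MemLp (fun ω => W ω k) 2 μ)
    (he : ∀ i, MemLp (fun ω => e ω i) 2 μ) (hWe : IndepFun W e μ)
    (he0 : ∀ i, ∫ ω, e ω i ∂μ = 0) (a b : ℝ) (M : Matrix κ ι ℝ) :
    secondMoment μ (fun ω => a • W ω + b • M *ᵥ e ω)
      = a ^ 2 • secondMoment μ W + b ^ 2 • (M * secondMoment μ e * Mᵀ) := by
  have hA (k : κ) : MemLp (fun ω => (a • W ω) k) 2 μ := (hW k).const_mul a
  have hB (k : κ) : MemLp (fun ω => (b • M *ᵥ e ω) k) 2 μ :=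
    (memLp_mulVec_apply M he k).const_mul b
  have hB0 (k : κ) : ∫ ω, (b • M *ᵥ e ω) k ∂μ = 0 := by
    simp only [Pi.smul_apply, smul_eq_mul]
    rw [integral_const_mul, integral_mulVec_apply M fun i => (he i).integrable one_le_two]
    simp [he0, ← Pi.zero_def]
  have hMe : Measurable fun v : ι → ℝ => b • M *ᵥ v := by
    refine measurable_pi_lambda _ fun k => ?_
    simp only [Pi.smul_apply, mulVec, dotProduct]
    fun_prop
  have hAB : IndepFun (fun ω => a • W ω) (fun ω => b • M *ᵥ e ω) μ :=
    hWe.comp (φ := fun w => a • w) (by fun_prop) hMe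
  change secondMoment μ ((fun ω => a • W ω) + fun ω => b • M *ᵥ e ω) = _
  rw [secondMoment_add_of_indepFun hA hB hAB hB0, secondMoment_smul,
    secondMoment_smul, secondMoment_mulVec M he]

theorem integral_sq_sum_mul_of_indepFun {X Y : Ω → ι → ℝ}
    (hX : ∀ i, MemLp (fun ω => X ω i) 2 μ) (hY : ∀ i, MemLp (fun ω => Y ω i) 2 μ)
    (hXY : IndepFun X Y μ) :
    ∫ ω, (∑ i, X ω i * Y ω i) ^ 2 ∂μ = (secondMoment μ X * secondMoment μ Y).trace := by
  have hindep (i j : ι) :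
      IndepFun (fun ω => X ω i * X ω j) (fun ω => Y ω j * Y ω i) μ :=
    hXY.comp ((measurable_pi_apply i).mul (measurable_pi_apply j))
      ((measurable_pi_apply j).mul (measurable_pi_apply i))
  have hint (i j : ι) : Integrable (fun ω => X ω i * X ω j * (Y ω j * Y ω i)) μ :=
    (hindep i j).integrable_mul ((hX i).integrable_mul (hX j)) ((hY j).integrable_mul (hY i))
  have hexpand (ω : Ω) :
      (∑ i, X ω i * Y ω i) ^ 2 = ∑ i, ∑ j, X ω i * X ω j * (Y ω j * Y ω i) := by
    rw [sq, sum_mul_sum]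
    exact sum_congr rfl fun i _ => sum_congr rfl fun j _ => by ring
  simp only [hexpand, Matrix.trace, Matrix.diag, Matrix.mul_apply, secondMoment_apply]
  rw [integral_finsetSum _ fun i _ => integrable_finsetSum _ fun j _ => hint i j]
  refine sum_congr rfl fun i _ => ?_
  rw [integral_finsetSum _ fun j _ => hint i j]
  exact sum_congr rfl fun j _ => (hindep i j).integral_fun_mul_eq_mul_integral
    ((hX i).integrable_mul (hX j)).aestronglyMeasurable
    ((hY j).integrable_mul (hY i)).aestronglyMeasurable

end ProbabilityTheory

theorem shrinkage_identity_general {n : ℕ}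
    {Ω : Type*} [MeasurableSpace Ω] (μ : Measure Ω) [IsProbabilityMeasure μ]
    (X W e : Ω → (Fin n → ℝ))
    (hindep : iIndepFun ![X, W, e] μ)
    (hX2 : ∀ i, MemLp (fun ω => X ω i) 2 μ)
    (hW2 : ∀ i, MemLp (fun ω => W ω i) 2 μ)
    (he2 : ∀ i, MemLp (fun ω => e ω i) 2 μ)
    (U : Matrix (Fin n) (Fin n) ℝ) (hU : IsUnit U.det)
    (hXcov : ∀ i j, ∫ ω, X ω i * X ω j ∂μ = (U.transpose * U) i j)
    (σW : ℝ)
    (hWcov : ∀ i j, ∫ ω, W ω i * W ω j ∂μ = if i = j then σW ^ 2 else 0)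
    (hemean : ∀ i, ∫ ω, e ω i ∂μ = 0)
    (β : ℝ) :
    (1 / (n : ℝ)) * ∫ ω,
        (∑ i, X ω i * (W ω i - β * (W ω i + (U⁻¹.mulVec (e ω)) i))) ^ 2 ∂μ =
      (1 - β) ^ 2 * σW ^ 2 * (U.transpose * U).trace / n +
        β ^ 2 * ((1 / (n : ℝ)) * ∫ ω, ∑ i, (e ω i) ^ 2 ∂μ) := by
  set Y : Ω → Fin n → ℝ := fun ω => (1 - β) • W ω + (-β) • U⁻¹ *ᵥ e ω
  have hY2 (i : Fin n) : MemLp (fun ω => Y ω i) 2 μ :=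
    ((hW2 i).const_mul _).add ((memLp_mulVec_apply _ he2 i).const_mul _)
  have hmeas (k : Fin 3) : AEMeasurable (![X, W, e] k) μ := by
    fin_cases k
    exacts [aemeasurable_pi_lambda _ fun i => (hX2 i).aemeasurable,
      aemeasurable_pi_lambda _ fun i => (hW2 i).aemeasurable,
      aemeasurable_pi_lambda _ fun i => (he2 i).aemeasurable]
  have hXY : IndepFun X Y μ :=
    (hindep.indepFun_prodMk₀ hmeas 1 2 0 (by decide) (by decide)).symm.comp measurable_id
      (by fun_prop : Measurable fun p : (Fin n → ℝ) × (Fin n → ℝ) =>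
        (1 - β) • p.1 + (-β) • U⁻¹ *ᵥ p.2)
  have hmomX : secondMoment μ X = Uᵀ * U := Matrix.ext hXcov
  have hmomW : secondMoment μ W = σW ^ 2 • 1 := by
    ext i j
    simp [secondMoment_apply, hWcov, Matrix.one_apply]
  have hmomY : secondMoment μ Y
      = (1 - β) ^ 2 • σW ^ 2 • 1 + β ^ 2 • (U⁻¹ * secondMoment μ e * U⁻¹ᵀ) := by
    rw [secondMoment_smul_add_smul_mulVec_of_indepFun hW2 he2
      (hindep.indepFun (i := 1) (j := 2) (by decide)) hemean, hmomW, neg_sq]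
  have hintegrand (ω : Ω) : ∑ i, X ω i * (W ω i - β * (W ω i + (U⁻¹ *ᵥ e ω) i))
      = ∑ i, X ω i * Y ω i := by
    simp only [Y, Pi.add_apply, Pi.smul_apply, smul_eq_mul]
    exact sum_congr rfl fun i _ => by ring
  simp only [hintegrand]
  rw [integral_sq_sum_mul_of_indepFun hX2 hY2 hXY, hmomX, hmomY, ← trace_secondMoment he2]
  simp only [Matrix.mul_add, Matrix.mul_smul, Matrix.mul_one, trace_add, trace_smul,
    trace_transpose_mul_self_mul_inv_conj hU, smul_eq_mul]
  ring

/-- shrinkage identity for dithered quantization: for mutually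
independent `X, W, e` with `E[X] = 0`, `E[XXᵀ] = UᵀU = Σ_X`, `E[WWᵀ] = σ_W²·I`,
`E[e] = 0`, finite second moments, and `Ŵ = β(W + U⁻¹e)`, one has
`(1/n)·E[(Xᵀ(W−Ŵ))²] = (1−β)²σ_W²·tr(Σ_X)/n + β²·(1/n)·E[‖e‖²]`. -/
theorem shrinkage_identity {n : ℕ} (hn : 1 ≤ n)
    {Ω : Type*} [MeasurableSpace Ω] (μ : Measure Ω) [IsProbabilityMeasure μ]
    (X W e : Ω → (Fin n → ℝ))
    (hXm : Measurable X) (hWm : Measurable W) (hem : Measurable e)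
    (hindep : iIndepFun ![X, W, e] μ)
    (hX2 : ∀ i, MemLp (fun ω => X ω i) 2 μ)
    (hW2 : ∀ i, MemLp (fun ω => W ω i) 2 μ)
    (he2 : ∀ i, MemLp (fun ω => e ω i) 2 μ)
    (U : Matrix (Fin n) (Fin n) ℝ) (hU : IsUnit U.det)
    (hXmean : ∀ i, ∫ ω, X ω i ∂μ = 0)
    (hXcov : ∀ i j, ∫ ω, X ω i * X ω j ∂μ = (U.transpose * U) i j)
    (σW : ℝ)
    (hWcov : ∀ i j, ∫ ω, W ω i * W ω j ∂μ = if i = j then σW ^ 2 else 0)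
    (hemean : ∀ i, ∫ ω, e ω i ∂μ = 0)
    (β : ℝ) :
    (1 / (n : ℝ)) * ∫ ω,
        (∑ i, X ω i * (W ω i - β * (W ω i + (U⁻¹.mulVec (e ω)) i))) ^ 2 ∂μ =
      (1 - β) ^ 2 * σW ^ 2 * (U.transpose * U).trace / n +
        β ^ 2 * ((1 / (n : ℝ)) * ∫ ω, ∑ i, (e ω i) ^ 2 ∂μ) :=
  shrinkage_identity_general μ X W e hindep hX2 hW2 he2 U hU hXcov σW hWcov hemean β
end

section
/- (Expected leading principal minor under random rotation.) Let n ≥ 1, 1 ≤ k ≤ n, let λ_1,…,λ_n ≥ 0, let Λ = diag(λ_1,…,λ_n), and let V be a random matrix distributed according to the Haar probability measure on the orthogonal group O(n). Let (Vᵀ Λ V)^{(k)} denote the top-left k×k submatrix of Vᵀ Λ V. Then E[det((Vᵀ Λ V)^{(k)})] = (1/C(n,k)) · Σ_{S ⊆ {1,…,n}, |S| = k} ∏_{i ∈ S} λ_i, where C(n,k) is the binomial coefficient; i.e., the expectation equals e_k(λ_1,…,λ_n)/C(n,k), with e_k the k-th elementary symmetric polynomial. -/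
/-!
Let `A` be the first `k` columns of `V`. By Cauchy–Binet,
`det (Aᵀ Λ A) = ∑_{|S| = k} (∏_{i ∈ S} λ_i) det (A_S)²`, where `A_S` keeps the rows in `S`.
Permuting the rows of `V` is left multiplication by an orthogonal matrix, so by invariance of
the Haar measure all the expectations `E[det (A_S)²]` are equal; they sum to
`E[det (Aᵀ A)] = 1`, hence each of them is `1 / C(n, k)`.
-/

open MeasureTheory Finset Matrix


/-- Borel measurable structure on the space of real matrices. -/
noncomputable instance matrixMeasurableSpace {n : ℕ} :
    MeasurableSpace (Matrix (Fin n) (Fin n) ℝ) := borel _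

instance matrixBorelSpace {n : ℕ} :
    BorelSpace (Matrix (Fin n) (Fin n) ℝ) := ⟨rfl⟩

open Set.powersetCard

theorem Matrix.det_mul_eq_sum_det_submatrix {R I : Type*} [CommRing R] [Fintype I]
    [LinearOrder I] {k : ℕ} (B : Matrix (Fin k) I R) (C : Matrix I (Fin k) R) :
    (B * C).det = ∑ s : Set.powersetCard I k,
      (B.submatrix id (ofFinEmbEquiv.symm s)).det *
        (C.submatrix (ofFinEmbEquiv.symm s) id).det := by
  open exteriorPower in
  -- Both sides evaluate the pairing of `⋀ᵏ (Dual (I → R))` with `⋀ᵏ (I → R)` on the rows of `B`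
  -- and the columns of `C`; expand the latter in the basis induced by the standard basis.
  let b := Pi.basisFun R I
  let rows : Fin k → Module.Dual R (I → R) := fun i => LinearMap.proj i ∘ₗ B.mulVecLin
  let cols : Fin k → I → R := fun j => Cᵀ j
  have hBC : (B * C).det = pairingDual R (I → R) k (ιMulti R k rows) (ιMulti R k cols) := by
    rw [pairingDual_ιMulti_ιMulti, ← det_transpose]
    congr 1
  rw [hBC, ← (b.exteriorPower k).sum_repr (ιMulti R k cols), map_sum]
  refine Fintype.sum_congr _ _ fun s => ?_
  rw [map_smul, basis_repr_apply, ιMultiDual_apply_ιMulti, basis_apply, ιMulti_family,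
    pairingDual_ιMulti_ιMulti, smul_eq_mul, mul_comm, ← det_transpose (C.submatrix _ _),
    ← det_transpose (B.submatrix _ _)]
  congr 2
  ext i j
  simp [rows, b, mulVec, dotProduct, Pi.single_apply]

theorem Matrix.det_transpose_mul_diagonal_mul {R I : Type*} [CommRing R] [Fintype I]
    [LinearOrder I] {k : ℕ} (A : Matrix I (Fin k) R) (d : I → R) :
    (Aᵀ * diagonal d * A).det = ∑ s : Set.powersetCard I k,
      (∏ i ∈ (s : Finset I), d i) * (A.submatrix (ofFinEmbEquiv.symm s) id).det ^ 2 := by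
  rw [det_mul_eq_sum_det_submatrix]
  refine Fintype.sum_congr _ _ fun s => ?_
  have hB : (Aᵀ * diagonal d).submatrix id (ofFinEmbEquiv.symm s) =
      (A.submatrix (ofFinEmbEquiv.symm s) id)ᵀ * diagonal (d ∘ ofFinEmbEquiv.symm s) := by
    ext i j
    simp [mul_apply, diagonal_apply]
  have hprod : ∏ j, (d ∘ ofFinEmbEquiv.symm s) j = ∏ i ∈ (s : Finset I), d i := by
    rw [← map_orderEmbOfFin_univ s.1 s.2, prod_map]
    rfl
  rw [hB, det_mul, det_transpose, det_diagonal, hprod]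
  ring

theorem Matrix.permMatrix_mem_orthogonalGroup {m R : Type*} [Fintype m] [DecidableEq m]
    [CommRing R] (σ : Equiv.Perm m) : σ.permMatrix R ∈ orthogonalGroup m R := by
  rw [mem_orthogonalGroup_iff', transpose_permMatrix, ← permMatrix_mul, mul_inv_cancel,
    permMatrix_one]

namespace Matrix.orthogonalGroup

instance {n : ℕ} : BorelSpace (orthogonalGroup (Fin n) ℝ) := Subtype.borelSpace _

variable {n k : ℕ} (hkn : k ≤ n)

noncomputable def sqMinor (s : Set.powersetCard (Fin n) k) (V : orthogonalGroup (Fin n) ℝ) :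
    ℝ :=
  ((V : Matrix (Fin n) (Fin n) ℝ).submatrix (ofFinEmbEquiv.symm s) (Fin.castLE hkn)).det ^ 2

theorem det_submatrix_transpose_mul_diagonal_mul (lam : Fin n → ℝ)
    (V : orthogonalGroup (Fin n) ℝ) :
    (((V : Matrix (Fin n) (Fin n) ℝ)ᵀ * diagonal lam * V).submatrix
        (Fin.castLE hkn) (Fin.castLE hkn)).det =
      ∑ s : Set.powersetCard (Fin n) k,
        (∏ i ∈ (s : Finset (Fin n)), lam i) * sqMinor hkn s V := by
  rw [submatrix_mul _ _ _ id _ Function.bijective_id,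
    submatrix_mul _ _ _ id _ Function.bijective_id, submatrix_id_id, ← transpose_submatrix,
    det_transpose_mul_diagonal_mul]
  rfl

theorem sum_sqMinor (V : orthogonalGroup (Fin n) ℝ) : ∑ s, sqMinor hkn s V = 1 := by
  have h := det_submatrix_transpose_mul_diagonal_mul hkn (fun _ => 1) V
  simp_rw [diagonal_one, mul_one, (mem_orthogonalGroup_iff' _ _).mp V.2,
    submatrix_one _ (Fin.castLE_injective hkn), det_one, prod_const_one, one_mul] at h
  exact h.symm

theorem sqMinor_nonneg (s : Set.powersetCard (Fin n) k) (V : orthogonalGroup (Fin n) ℝ) :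
    0 ≤ sqMinor hkn s V :=
  sq_nonneg _

theorem sqMinor_le_one (s : Set.powersetCard (Fin n) k) (V : orthogonalGroup (Fin n) ℝ) :
    sqMinor hkn s V ≤ 1 :=
  sum_sqMinor hkn V ▸
    single_le_sum (f := (sqMinor hkn · V)) (fun t _ => sqMinor_nonneg hkn t V) (mem_univ s)

theorem continuous_sqMinor (s : Set.powersetCard (Fin n) k) : Continuous (sqMinor hkn s) :=
  ((continuous_subtype_val.matrix_submatrix _ _).matrix_det).pow 2

theorem integrable_sqMinor (μ : Measure (orthogonalGroup (Fin n) ℝ)) [IsFiniteMeasure μ]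
    (s : Set.powersetCard (Fin n) k) : Integrable (sqMinor hkn s) μ :=
  .of_bound (continuous_sqMinor hkn s).aestronglyMeasurable 1 <| .of_forall fun V => by
    rw [Real.norm_of_nonneg (sqMinor_nonneg hkn s V)]
    exact sqMinor_le_one hkn s V

theorem sqMinor_permMatrix_mul (σ : Equiv.Perm (Fin n)) {s t : Set.powersetCard (Fin n) k}
    (hσ : ∀ j, σ (ofFinEmbEquiv.symm t j) = ofFinEmbEquiv.symm s j)
    (V : orthogonalGroup (Fin n) ℝ) :
    sqMinor hkn t (⟨σ.permMatrix ℝ, permMatrix_mem_orthogonalGroup σ⟩ * V) =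
      sqMinor hkn s V := by
  simp only [sqMinor, Submonoid.coe_mul, PEquiv.toMatrix_toPEquiv_mul, submatrix_submatrix]
  rw [show ⇑σ ∘ ⇑(ofFinEmbEquiv.symm t) = ofFinEmbEquiv.symm s from funext hσ]
  rfl

theorem integral_sqMinor_eq (μ : Measure (orthogonalGroup (Fin n) ℝ)) [μ.IsMulLeftInvariant]
    (s t : Set.powersetCard (Fin n) k) :
    ∫ V, sqMinor hkn s V ∂μ = ∫ V, sqMinor hkn t V ∂μ := by
  obtain ⟨σ, hσ⟩ := Equiv.Perm.exists_extending_pair _ _ (ofFinEmbEquiv.symm t).injective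
    (ofFinEmbEquiv.symm s).injective
  simp_rw [← sqMinor_permMatrix_mul hkn σ hσ, integral_mul_left_eq_self]

theorem integral_sqMinor (μ : Measure (orthogonalGroup (Fin n) ℝ)) [IsProbabilityMeasure μ]
    [μ.IsMulLeftInvariant] (s : Set.powersetCard (Fin n) k) :
    ∫ V, sqMinor hkn s V ∂μ = 1 / n.choose k := by
  have hsum : ∑ t, ∫ V, sqMinor hkn t V ∂μ = 1 := by
    rw [← integral_finsetSum _ fun t _ => integrable_sqMinor hkn μ t]
    simp [sum_sqMinor]
  have hcard : Fintype.card (Set.powersetCard (Fin n) k) = n.choose k := by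
    simpa using Set.powersetCard.card (α := Fin n) (n := k)
  simp_rw [integral_sqMinor_eq hkn μ _ s, sum_const, card_univ, hcard, nsmul_eq_mul] at hsum
  rw [eq_div_iff (by exact_mod_cast (Nat.choose_pos hkn).ne'), mul_comm, hsum]

end Matrix.orthogonalGroup

theorem expected_principal_minor_haar_general {n k : ℕ}
    (hkn : k ≤ n)
    (lam : Fin n → ℝ)
    (μ : Measure (Matrix.orthogonalGroup (Fin n) ℝ)) [IsProbabilityMeasure μ]
    (hinv : ∀ g : Matrix.orthogonalGroup (Fin n) ℝ,
      Measure.map (fun x => g * x) μ = μ) :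
    ∫ V : Matrix.orthogonalGroup (Fin n) ℝ,
        (((V : Matrix (Fin n) (Fin n) ℝ).transpose * Matrix.diagonal lam *
            (V : Matrix (Fin n) (Fin n) ℝ)).submatrix
          (Fin.castLE hkn) (Fin.castLE hkn)).det ∂μ =
      (1 / (n.choose k : ℝ)) *
        ∑ S ∈ Finset.univ.powersetCard k, ∏ i ∈ S, lam i := by
  have : μ.IsMulLeftInvariant := ⟨hinv⟩
  simp_rw [orthogonalGroup.det_submatrix_transpose_mul_diagonal_mul]
  rw [integral_finsetSum _ fun s _ => (orthogonalGroup.integrable_sqMinor hkn μ s).const_mul _]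
  simp_rw [integral_const_mul, orthogonalGroup.integral_sqMinor hkn μ, ← sum_mul]
  rw [mul_comm]
  congr 1
  exact (sum_subtype (univ.powersetCard k) (p := (· ∈ Set.powersetCard (Fin n) k))
    (fun S => by simp) (fun S => ∏ i ∈ S, lam i)).symm

/-- expected leading principal minor under random rotation: if `V` is
Haar-distributed on the orthogonal group `O(n)` (its law `μ` being the unique
left-translation-invariant Borel probability measure) and `Λ = diag(λ)` with
`λ_i ≥ 0`, then for `1 ≤ k ≤ n`,
`E[det((VᵀΛV)^{(k)})] = e_k(λ₁,…,λ_n)/C(n,k)`, where `(·)^{(k)}` is the top-left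
`k×k` submatrix and `e_k` the `k`-th elementary symmetric polynomial. -/
theorem expected_principal_minor_haar {n k : ℕ} (hn : 1 ≤ n) (hk1 : 1 ≤ k)
    (hkn : k ≤ n)
    (lam : Fin n → ℝ) (hlam : ∀ i, 0 ≤ lam i)
    (μ : Measure (Matrix.orthogonalGroup (Fin n) ℝ)) [IsProbabilityMeasure μ]
    (hinv : ∀ g : Matrix.orthogonalGroup (Fin n) ℝ,
      Measure.map (fun x => g * x) μ = μ) :
    ∫ V : Matrix.orthogonalGroup (Fin n) ℝ,
        (((V : Matrix (Fin n) (Fin n) ℝ).transpose * Matrix.diagonal lam *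
            (V : Matrix (Fin n) (Fin n) ℝ)).submatrix
          (Fin.castLE hkn) (Fin.castLE hkn)).det ∂μ =
      (1 / (n.choose k : ℝ)) *
        ∑ S ∈ Finset.univ.powersetCard k, ∏ i ∈ S, lam i :=
  expected_principal_minor_haar_general hkn lam μ hinv
end
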